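/- Let (M,g) be a compact Riemannian n-manifold (n ≥ 3) with Ric ≥ (n−1)g and suppose the Sobolev inequality with constants A, B holds on M. Then there exists x₀ ∈ M such that for every y₀ ∈ 𝕊ⁿ and ρ ∈ [0,π], Vol_g(B_M(x₀,ρ)) ≥ min{A₀/A, B₀/B}^(n/2) · Vol_{𝕊ⁿ}(B(y₀,ρ)), where A₀ = 4/(n(n−2))·ω_n^(−2/n), B₀ = ω_n^(−2/n). -/

import Mathlib

open MeasureTheory Real

/-- Vol_{𝕊ⁿ}(B(y₀,ρ)) = Vol(𝕊^{n−1})·∫₀^ρ sin^{n−1}t dt, with Vol(𝕊^{n−1}) = n·ω̃_n. -/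
noncomputable def sphereBallVol (n : ℕ) (ρ : ℝ) : ℝ :=
  ((n : ℝ) * (volume (Metric.ball (0 : EuclideanSpace ℝ (Fin n)) 1)).toReal) *
    ∫ t in (0:ℝ)..ρ, Real.sin t ^ (n - 1)

open Filter Topology

lemma stDeriv_eq_zero {s : ℝ} (h : s ≤ 0 ∨ 1 ≤ s) :
    deriv Real.smoothTransition s = 0 := by
  have hdiff : DifferentiableAt ℝ Real.smoothTransition s :=
    ((Real.smoothTransition.contDiff (n := 1)).differentiable (by simp)).differentiableAt
  rcases h with h | h
  · have hu : UniqueDiffWithinAt ℝ (Set.Iic (0:ℝ)) s := uniqueDiffOn_Iic 0 s h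
    have h1 : HasDerivWithinAt Real.smoothTransition 0 (Set.Iic (0:ℝ)) s :=
      (hasDerivWithinAt_const s _ (0:ℝ)).congr
        (fun y hy => Real.smoothTransition.zero_of_nonpos hy)
        (Real.smoothTransition.zero_of_nonpos h)
    have h2 : HasDerivWithinAt Real.smoothTransition (deriv Real.smoothTransition s)
        (Set.Iic (0:ℝ)) s := hdiff.hasDerivAt.hasDerivWithinAt
    have e1 := h1.derivWithin hu
    have e2 := h2.derivWithin hu
    rw [← e2, e1]
  · have hu : UniqueDiffWithinAt ℝ (Set.Ici (1:ℝ)) s := uniqueDiffOn_Ici 1 s h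
    have h1 : HasDerivWithinAt Real.smoothTransition 0 (Set.Ici (1:ℝ)) s :=
      (hasDerivWithinAt_const s _ (1:ℝ)).congr
        (fun y hy => Real.smoothTransition.one_of_one_le hy)
        (Real.smoothTransition.one_of_one_le h)
    have h2 : HasDerivWithinAt Real.smoothTransition (deriv Real.smoothTransition s)
        (Set.Ici (1:ℝ)) s := hdiff.hasDerivAt.hasDerivWithinAt
    have e1 := h1.derivWithin hu
    have e2 := h2.derivWithin hu
    rw [← e2, e1]

lemma stDeriv_bound : ∃ C : ℝ, 0 ≤ C ∧ ∀ s, |deriv Real.smoothTransition s| ≤ C := by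
  have hc : Continuous (deriv Real.smoothTransition) :=
    (Real.smoothTransition.contDiff (n := 1)).continuous_deriv le_rfl
  obtain ⟨z, hz, hzmax⟩ := isCompact_Icc.exists_isMaxOn (Set.nonempty_Icc.2 zero_le_one)
    (hc.abs.continuousOn (s := Set.Icc (0:ℝ) 1))
  refine ⟨|deriv Real.smoothTransition z|, abs_nonneg _, fun s => ?_⟩
  by_cases hs : s ∈ Set.Icc (0:ℝ) 1
  · exact hzmax hs
  · have : deriv Real.smoothTransition s = 0 := by
      apply stDeriv_eq_zero
      rw [Set.mem_Icc, not_and_or] at hs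
      rcases hs with h | h
      · exact Or.inl (le_of_not_ge h)
      · exact Or.inr (le_of_not_ge h)
    simp [this]

lemma omega_pos (n : ℕ) :
    0 < (volume (Metric.ball (0 : EuclideanSpace ℝ (Fin n)) 1)).toReal :=
  ENNReal.toReal_pos (Metric.measure_ball_pos volume _ one_pos).ne' (measure_ball_lt_top).ne

lemma sin_pow_intInt (n : ℕ) (a b : ℝ) :
    IntervalIntegrable (fun t => Real.sin t ^ (n-1)) volume a b :=
  (Real.continuous_sin.pow _).intervalIntegrable a b

lemma sphereBallVol_nonneg (n : ℕ) {ρ : ℝ} (h0 : 0 ≤ ρ) (hπ : ρ ≤ Real.pi) :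
    0 ≤ sphereBallVol n ρ := by
  apply mul_nonneg (by positivity)
  apply intervalIntegral.integral_nonneg h0
  intro t ht
  exact pow_nonneg (Real.sin_nonneg_of_nonneg_of_le_pi ht.1 (ht.2.trans hπ)) _

lemma sphereBallVol_pi_pos {n : ℕ} (hn : 3 ≤ n) : 0 < sphereBallVol n Real.pi := by
  apply mul_pos
  · have := omega_pos n
    have hn' : (0:ℝ) < n := by
      have : 0 < n := by omega
      exact_mod_cast this
    positivity
  · apply intervalIntegral.intervalIntegral_pos_of_pos_on (sin_pow_intInt n 0 Real.pi)
    · intro t ht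
      exact pow_pos (Real.sin_pos_of_pos_of_lt_pi ht.1 ht.2) _
    · exact Real.pi_pos

lemma sphereBallVol_diff_le {n : ℕ} (hn : 3 ≤ n) {ε : ℝ} (hε : 0 < ε) (hεπ : ε ≤ Real.pi) :
    sphereBallVol n Real.pi - sphereBallVol n (Real.pi - ε) ≤
      (volume (Metric.ball (0 : EuclideanSpace ℝ (Fin n)) 1)).toReal * ε ^ n := by
  set ω := (volume (Metric.ball (0 : EuclideanSpace ℝ (Fin n)) 1)).toReal with hω
  have hωpos := omega_pos n
  have hsplit : (∫ t in (0:ℝ)..(Real.pi - ε), Real.sin t ^ (n-1)) +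
      (∫ t in (Real.pi - ε)..Real.pi, Real.sin t ^ (n-1)) =
      ∫ t in (0:ℝ)..Real.pi, Real.sin t ^ (n-1) :=
    intervalIntegral.integral_add_adjacent_intervals (sin_pow_intInt n _ _) (sin_pow_intInt n _ _)
  have hmono : (∫ t in (Real.pi - ε)..Real.pi, Real.sin t ^ (n-1)) ≤
      ∫ t in (Real.pi - ε)..Real.pi, (Real.pi - t) ^ (n-1) := by
    apply intervalIntegral.integral_mono_on (by linarith) (sin_pow_intInt n _ _)
      (((continuous_const.sub continuous_id).pow _).intervalIntegrable _ _)
    intro t ht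
    have h1 : 0 ≤ Real.pi - t := by linarith [ht.2]
    have h2 : Real.sin t = Real.sin (Real.pi - t) := (Real.sin_pi_sub t).symm
    have h3 : Real.sin (Real.pi - t) ≤ Real.pi - t := Real.sin_le h1
    have h4 : 0 ≤ Real.sin t := by
      rw [h2]; exact Real.sin_nonneg_of_nonneg_of_le_pi h1 (by linarith [ht.1])
    exact pow_le_pow_left₀ h4 (h2 ▸ h3) _
  have hcomp : (∫ t in (Real.pi - ε)..Real.pi, (Real.pi - t) ^ (n-1)) = ε ^ n / n := by
    rw [intervalIntegral.integral_comp_sub_left (fun t => t ^ (n-1)) Real.pi]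
    simp only [sub_self, sub_sub_cancel]
    rw [integral_pow]
    have hn1 : n - 1 + 1 = n := by omega
    have hc : ((n - 1 : ℕ) : ℝ) + 1 = (n : ℝ) := by
      push_cast [Nat.cast_sub (by omega : 1 ≤ n)]; ring
    rw [hn1, zero_pow (by omega : n ≠ 0), hc, sub_zero]
  have hne : ((n:ℝ)) ≠ 0 := by
    have : 0 < n := by omega
    positivity
  have hkey : sphereBallVol n Real.pi - sphereBallVol n (Real.pi - ε) =
      ((n:ℝ) * ω) * ∫ t in (Real.pi - ε)..Real.pi, Real.sin t ^ (n-1) := by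
    rw [sphereBallVol, sphereBallVol, ← hω, ← mul_sub, ← hsplit]; ring
  rw [hkey]
  calc ((n:ℝ) * ω) * ∫ t in (Real.pi - ε)..Real.pi, Real.sin t ^ (n-1)
      ≤ ((n:ℝ) * ω) * (ε ^ n / n) := by
        apply mul_le_mul_of_nonneg_left _ (by positivity)
        rw [← hcomp]; exact hmono
    _ = ω * ε ^ n := by field_simp

set_option maxHeartbeats 1000000 in
/-- Theorem 1 (ii): on a compact Riemannian n-manifold with Ric ≥ (n−1)g (encoded by the
Bonnet–Myers diameter bound `hdiam` and the Bishop–Gromov comparison `hBG` against the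
unit-sphere model), if the Sobolev inequality with constants A, B > 0 holds (with a
gradient-squared operator `gradSq` vanishing on constants and satisfying the eikonal
bound `hgradd` for radial functions), then there exists x₀ ∈ M such that for every
ρ ∈ [0,π], Vol(B(x₀,ρ)) ≥ min{A₀/A, B₀/B}^(n/2)·Vol_{𝕊ⁿ}(B(y₀,ρ)), where
A₀ = 4/(n(n−2))·ω_n^(−2/n) and B₀ = ω_n^(−2/n), ω_n = Vol(𝕊ⁿ) = sphereBallVol n π. -/
theorem stmt_13 (n : ℕ) (hn : 3 ≤ n)
    {M : Type*} [MetricSpace M] [CompactSpace M] [Nonempty M]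
    [MeasurableSpace M] [BorelSpace M]
    (μ : Measure M) [IsFiniteMeasure μ] (hμ : μ Set.univ ≠ 0)
    (hdiam : ∀ x y : M, dist x y ≤ Real.pi)
    (hBG : ∀ (x : M) (r R : ℝ), 0 < r → r ≤ R → R ≤ Real.pi →
      (μ (Metric.ball x R)).toReal * sphereBallVol n r ≤
        (μ (Metric.ball x r)).toReal * sphereBallVol n R)
    (gradSq : (M → ℝ) → M → ℝ)
    (hgradc : ∀ c : ℝ, gradSq (fun _ => c) = fun _ => 0)
    (hgradd : ∀ (x₀ : M) (φ : ℝ → ℝ), Differentiable ℝ φ →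
      ∀ x, gradSq (fun y => φ (dist x₀ y)) x ≤ (deriv φ (dist x₀ x)) ^ 2)
    (A B : ℝ) (hA : 0 < A) (hB : 0 < B)
    (hSob : ∀ u : M → ℝ,
      (∫ x, |u x| ^ ((2 * (n : ℝ)) / ((n : ℝ) - 2)) ∂μ) ^ (((n : ℝ) - 2) / n) ≤
        A * ∫ x, gradSq u x ∂μ + B * ∫ x, u x ^ 2 ∂μ) :
    ∃ x₀ : M, ∀ ρ ∈ Set.Icc (0 : ℝ) Real.pi,
      (min ((4 / ((n : ℝ) * ((n : ℝ) - 2)) * sphereBallVol n Real.pi ^ (-(2 : ℝ) / n)) / A)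
           (sphereBallVol n Real.pi ^ (-(2 : ℝ) / n) / B)) ^ ((n : ℝ) / 2) *
        sphereBallVol n ρ ≤ (μ (Metric.ball x₀ ρ)).toReal := by
  obtain ⟨C, hC0, hCbd⟩ := stDeriv_bound
  have hπ := Real.pi_pos
  have hn0 : (0:ℝ) < (n:ℝ) := by
    have : 0 < n := by omega
    exact_mod_cast this
  have hn2 : (0:ℝ) < (n:ℝ) - 2 := by
    have : (3:ℝ) ≤ (n:ℝ) := by exact_mod_cast hn
    linarith
  set ω := (volume (Metric.ball (0 : EuclideanSpace ℝ (Fin n)) 1)).toReal with hωdef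
  have hωpos : 0 < ω := omega_pos n
  set W := sphereBallVol n Real.pi with hWdef
  have hWpos : 0 < W := sphereBallVol_pi_pos hn
  have hint : ∀ f : M → ℝ, Continuous f → Integrable f μ := fun f hf =>
    hf.integrable_of_hasCompactSupport (IsClosed.isCompact (isClosed_tsupport f))
  -- choose a point in the support of μ
  obtain ⟨x₀, hx₀⟩ : ∃ x₀ : M, ∀ r : ℝ, 0 < r → 0 < μ (Metric.ball x₀ r) := by
    by_contra hcon
    push_neg at hcon
    choose r hr hr0 using hcon
    obtain ⟨t, ht⟩ := isCompact_univ.elim_finite_subcover (fun x : M => Metric.ball x (r x))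
      (fun x => Metric.isOpen_ball)
      (fun x _ => Set.mem_iUnion.2 ⟨x, Metric.mem_ball_self (hr x)⟩)
    apply hμ
    refine le_antisymm (le_trans (measure_mono ht) (le_of_eq ?_)) zero_le
    refine (measure_biUnion_null_iff t.countable_toSet).2 fun x _ => ?_
    exact le_antisymm (hr0 x) zero_le
  refine ⟨x₀, ?_⟩
  set m := (μ (Metric.ball x₀ Real.pi)).toReal with hmdef
  have hm0 : 0 < μ (Metric.ball x₀ Real.pi) := hx₀ _ hπ
  have hmpos : 0 < m := ENNReal.toReal_pos hm0.ne' (measure_ne_top μ _)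
  -- the key ε-estimate coming from the Sobolev inequality with a radial cutoff
  have key : ∀ ε : ℝ, 0 < ε → ε ≤ Real.pi/2 →
      (μ (Metric.ball x₀ (Real.pi - ε))).toReal ^ (((n:ℝ) - 2) / n) ≤
        (A * C^2 * m * ω / W) * ε^(n-2) + B * m := by
    intro ε hε hε2
    have hεπ : ε ≤ Real.pi := by linarith
    set φ : ℝ → ℝ := fun t => Real.smoothTransition ((Real.pi - t)/ε) with hφdef
    have hφdiff : Differentiable ℝ φ := by
      rw [hφdef]
      exact ((Real.smoothTransition.contDiff (n := 1)).differentiable (by simp)).comp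
        (((differentiable_const _).sub differentiable_id).div_const ε)
    have hφderiv : ∀ t, deriv φ t =
        deriv Real.smoothTransition ((Real.pi - t)/ε) * (-1/ε) := by
      intro t
      have hinner : HasDerivAt (fun t : ℝ => (Real.pi - t)/ε) (-1/ε) t := by
        have h1 : HasDerivAt (fun t : ℝ => Real.pi - t) (-1) t :=
          (hasDerivAt_id t).const_sub Real.pi
        exact h1.div_const ε
      have houter : HasDerivAt Real.smoothTransition
          (deriv Real.smoothTransition ((Real.pi - t)/ε)) ((Real.pi - t)/ε) :=
        ((((Real.smoothTransition.contDiff (n := 1)).differentiable (by simp))) _).hasDerivAt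
      exact (houter.comp t hinner).deriv
    have hφzero : ∀ t : ℝ, (t ≤ Real.pi - ε ∨ Real.pi ≤ t) → deriv φ t = 0 := by
      intro t ht
      rw [hφderiv t]
      rcases ht with ht | ht
      · rw [stDeriv_eq_zero (Or.inr (by rw [le_div_iff₀ hε]; linarith))]; ring
      · rw [stDeriv_eq_zero (Or.inl (by
          rw [div_nonpos_iff]; right; constructor <;> linarith))]; ring
    have hφbd : ∀ t : ℝ, (deriv φ t)^2 ≤ C^2/ε^2 := by
      intro t
      rw [hφderiv t]
      have h1 := hCbd ((Real.pi - t)/ε)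
      have habs := abs_nonneg (deriv Real.smoothTransition ((Real.pi - t)/ε))
      have hsq := sq_abs (deriv Real.smoothTransition ((Real.pi - t)/ε))
      have h2 : (deriv Real.smoothTransition ((Real.pi - t)/ε))^2 ≤ C^2 := by nlinarith
      have h3 : (deriv Real.smoothTransition ((Real.pi - t)/ε) * (-1/ε))^2
          = (deriv Real.smoothTransition ((Real.pi - t)/ε))^2 / ε^2 := by
        field_simp
      rw [h3]
      gcongr
    set u : M → ℝ := fun y => φ (dist x₀ y) with hudef
    have hdistc : Continuous (fun y : M => dist x₀ y) := continuous_const.dist continuous_id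
    have hu_cont : Continuous u := hφdiff.continuous.comp hdistc
    have hu0 : ∀ y, 0 ≤ u y := fun y => Real.smoothTransition.nonneg _
    have hu1 : ∀ y, u y ≤ 1 := fun y => Real.smoothTransition.le_one _
    have hu_one : ∀ y ∈ Metric.ball x₀ (Real.pi - ε), u y = 1 := by
      intro y hy
      apply Real.smoothTransition.one_of_one_le
      rw [Metric.mem_ball, dist_comm] at hy
      rw [le_div_iff₀ hε]; linarith
    have hu_zero : ∀ y, y ∉ Metric.ball x₀ Real.pi → u y = 0 := by
      intro y hy
      apply Real.smoothTransition.zero_of_nonpos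
      rw [Metric.mem_ball, dist_comm, not_lt] at hy
      rw [div_nonpos_iff]; right; constructor <;> linarith
    set g : M → ℝ := fun y => (deriv φ (dist x₀ y))^2 with hgdef
    have hg_cont : Continuous g := by
      have h1 : Continuous (deriv φ) := by
        have he : deriv φ = fun t => deriv Real.smoothTransition ((Real.pi - t)/ε) * (-1/ε) :=
          funext hφderiv
        rw [he]
        exact (((Real.smoothTransition.contDiff (n := 1)).continuous_deriv le_rfl).comp
          ((continuous_const.sub continuous_id).div_const ε)).mul continuous_const
      exact (h1.comp hdistc).pow 2
    have hg0 : ∀ y, 0 ≤ g y := fun y => sq_nonneg _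
    set ann : Set M := Metric.ball x₀ Real.pi \ Metric.closedBall x₀ (Real.pi - ε) with hanndef
    have hann_meas : MeasurableSet ann :=
      Metric.isOpen_ball.measurableSet.diff measurableSet_closedBall
    have hg_le : ∀ y, g y ≤ Set.indicator ann (fun _ => C^2/ε^2) y := by
      intro y
      by_cases hy : y ∈ ann
      · rw [Set.indicator_of_mem hy]; exact hφbd _
      · rw [Set.indicator_of_notMem hy]
        have hz : deriv φ (dist x₀ y) = 0 := by
          apply hφzero
          by_cases hy2 : y ∈ Metric.closedBall x₀ (Real.pi - ε)
          · left; rw [Metric.mem_closedBall, dist_comm] at hy2; exact hy2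
          · right
            have hyb : y ∉ Metric.ball x₀ Real.pi := fun hball => hy ⟨hball, hy2⟩
            rw [Metric.mem_ball, dist_comm, not_lt] at hyb; exact hyb
        show (deriv φ (dist x₀ y))^2 ≤ 0
        rw [hz]; norm_num
    have hI_grad : ∫ x, gradSq u x ∂μ ≤ C^2/ε^2 * (μ ann).toReal := by
      have hgs : ∀ y, gradSq u y ≤ g y := fun y => hgradd x₀ φ hφdiff y
      have hg_int : Integrable g μ := hint g hg_cont
      have hind_int : Integrable (Set.indicator ann fun _ => C^2/ε^2) μ :=
        (integrable_const _).indicator hann_meas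
      have h2 : ∫ x, g x ∂μ ≤ C^2/ε^2 * (μ ann).toReal := by
        calc ∫ x, g x ∂μ ≤ ∫ x, Set.indicator ann (fun _ => C^2/ε^2) x ∂μ :=
              integral_mono hg_int hind_int hg_le
          _ = (μ ann).toReal • (C^2/ε^2) := integral_indicator_const _ hann_meas
          _ = C^2/ε^2 * (μ ann).toReal := by rw [smul_eq_mul]; ring
      by_cases hgi : Integrable (fun x => gradSq u x) μ
      · exact le_trans (integral_mono hgi hg_int hgs) h2
      · rw [integral_undef hgi]
        exact mul_nonneg (by positivity) ENNReal.toReal_nonneg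
    have hI_u2 : ∫ x, u x ^ 2 ∂μ ≤ m := by
      have h1 : ∀ y, u y ^ 2 ≤ Set.indicator (Metric.ball x₀ Real.pi) (fun _ => (1:ℝ)) y := by
        intro y
        by_cases hy : y ∈ Metric.ball x₀ Real.pi
        · rw [Set.indicator_of_mem hy]
          exact pow_le_one₀ (hu0 y) (hu1 y)
        · rw [Set.indicator_of_notMem hy, hu_zero y hy]; norm_num
      calc ∫ x, u x ^ 2 ∂μ
          ≤ ∫ x, Set.indicator (Metric.ball x₀ Real.pi) (fun _ => (1:ℝ)) x ∂μ :=
            integral_mono (hint _ (hu_cont.pow 2))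
              ((integrable_const _).indicator Metric.isOpen_ball.measurableSet) h1
        _ = m := by
            rw [integral_indicator_const _ Metric.isOpen_ball.measurableSet, smul_eq_mul, mul_one]; rfl
    have hppos : 0 < (2 * (n:ℝ)) / ((n:ℝ) - 2) := by positivity
    have hI_low : (μ (Metric.ball x₀ (Real.pi - ε))).toReal ≤
        ∫ x, |u x| ^ ((2 * (n:ℝ)) / ((n:ℝ) - 2)) ∂μ := by
      have h1 : ∀ y, Set.indicator (Metric.ball x₀ (Real.pi - ε)) (fun _ => (1:ℝ)) y ≤
          |u y| ^ ((2 * (n:ℝ)) / ((n:ℝ) - 2)) := by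
        intro y
        by_cases hy : y ∈ Metric.ball x₀ (Real.pi - ε)
        · rw [Set.indicator_of_mem hy, hu_one y hy]
          simp
        · rw [Set.indicator_of_notMem hy]
          positivity
      have hrpow_cont : Continuous (fun y => |u y| ^ ((2 * (n:ℝ)) / ((n:ℝ) - 2))) :=
        (hu_cont.abs).rpow_const (fun y => Or.inr hppos.le)
      calc (μ (Metric.ball x₀ (Real.pi - ε))).toReal
          = ∫ x, Set.indicator (Metric.ball x₀ (Real.pi - ε)) (fun _ => (1:ℝ)) x ∂μ := by
            rw [integral_indicator_const _ Metric.isOpen_ball.measurableSet, smul_eq_mul, mul_one]; rfl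
        _ ≤ ∫ x, |u x| ^ ((2 * (n:ℝ)) / ((n:ℝ) - 2)) ∂μ :=
            integral_mono ((integrable_const _).indicator Metric.isOpen_ball.measurableSet)
              (hint _ hrpow_cont) h1
    have hann_le : (μ ann).toReal ≤ m * (ω * ε^n) / W := by
      have hsub : Metric.closedBall x₀ (Real.pi - ε) ⊆ Metric.ball x₀ Real.pi :=
        Metric.closedBall_subset_ball (by linarith)
      have hd : (μ ann).toReal = m - (μ (Metric.closedBall x₀ (Real.pi - ε))).toReal := by
        rw [hanndef,
          measure_diff hsub measurableSet_closedBall.nullMeasurableSet (measure_ne_top μ _),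
          ENNReal.toReal_sub_of_le (measure_mono hsub) (measure_ne_top μ _)]
      have hmb : (μ (Metric.ball x₀ (Real.pi - ε))).toReal ≤
          (μ (Metric.closedBall x₀ (Real.pi - ε))).toReal :=
        ENNReal.toReal_mono (measure_ne_top μ _) (measure_mono Metric.ball_subset_closedBall)
      have hbg := hBG x₀ (Real.pi - ε) Real.pi (by linarith) (by linarith) le_rfl
      rw [← hWdef, ← hmdef] at hbg
      have hdiff2 := sphereBallVol_diff_le hn hε hεπ
      rw [← hWdef, ← hωdef] at hdiff2
      rw [hd, le_div_iff₀ hWpos]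
      nlinarith [mul_le_mul_of_nonneg_right hmb hWpos.le,
        mul_le_mul_of_nonneg_left hdiff2 hmpos.le,
        ENNReal.toReal_nonneg (a := μ (Metric.ball x₀ (Real.pi - ε)))]
    calc (μ (Metric.ball x₀ (Real.pi - ε))).toReal ^ (((n:ℝ) - 2) / n)
        ≤ (∫ x, |u x| ^ ((2 * (n:ℝ)) / ((n:ℝ) - 2)) ∂μ) ^ (((n:ℝ) - 2) / n) :=
          Real.rpow_le_rpow ENNReal.toReal_nonneg hI_low (by positivity)
      _ ≤ A * ∫ x, gradSq u x ∂μ + B * ∫ x, u x ^ 2 ∂μ := hSob u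
      _ ≤ A * (C^2/ε^2 * (μ ann).toReal) + B * m := by
          have t1 := mul_le_mul_of_nonneg_left hI_grad hA.le
          have t2 := mul_le_mul_of_nonneg_left hI_u2 hB.le
          linarith
      _ ≤ A * (C^2/ε^2 * (m * (ω * ε^n) / W)) + B * m := by
          have h0 : (0:ℝ) ≤ C^2/ε^2 := by positivity
          have t1 := mul_le_mul_of_nonneg_left hann_le h0
          have t2 := mul_le_mul_of_nonneg_left t1 hA.le
          linarith
      _ = (A * C^2 * m * ω / W) * ε^(n-2) + B * m := by
          have hεpow : ε^n = ε^2 * ε^(n-2) := by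
            rw [← pow_add]; congr 1; omega
          rw [hεpow]
          field_simp
  -- pass to the limit ε → 0
  have hseq : Tendsto (fun k : ℕ => (μ (Metric.ball x₀ (Real.pi - Real.pi/((k:ℝ)+2)))).toReal)
      atTop (𝓝 m) := by
    have hmono : Monotone (fun k : ℕ => Metric.ball x₀ (Real.pi - Real.pi/((k:ℝ)+2))) := by
      intro a b hab
      apply Metric.ball_subset_ball
      have hab' : ((a:ℝ)+2) ≤ ((b:ℝ)+2) := by
        have : (a:ℝ) ≤ b := Nat.cast_le.2 hab
        linarith
      have h2 : Real.pi/((b:ℝ)+2) ≤ Real.pi/((a:ℝ)+2) :=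
        div_le_div_of_nonneg_left hπ.le (by positivity) hab'
      linarith
    have hunion : (⋃ k : ℕ, Metric.ball x₀ (Real.pi - Real.pi/((k:ℝ)+2)))
        = Metric.ball x₀ Real.pi := by
      apply Set.Subset.antisymm
      · refine Set.iUnion_subset fun k => Metric.ball_subset_ball ?_
        have : 0 < Real.pi/((k:ℝ)+2) := by positivity
        linarith
      · intro y hy
        rw [Metric.mem_ball] at hy
        have hpos : 0 < Real.pi - dist y x₀ := by linarith
        obtain ⟨k, hk⟩ := exists_nat_gt (Real.pi / (Real.pi - dist y x₀))
        refine Set.mem_iUnion.2 ⟨k, ?_⟩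
        rw [Metric.mem_ball]
        have hk2 : Real.pi / (Real.pi - dist y x₀) < (k:ℝ) + 2 := by linarith
        have hk3 : Real.pi < ((k:ℝ)+2) * (Real.pi - dist y x₀) := by
          rw [div_lt_iff₀ hpos] at hk2
          linarith [mul_comm ((k:ℝ)+2) (Real.pi - dist y x₀)]
        have hk4 : Real.pi / ((k:ℝ)+2) < Real.pi - dist y x₀ := by
          rw [div_lt_iff₀ (by positivity)]
          nlinarith
        linarith
    have h1 := tendsto_measure_iUnion_atTop (μ := μ) hmono
    rw [hunion] at h1
    exact (ENNReal.tendsto_toReal (measure_ne_top μ _)).comp h1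
  have hql : m ^ (((n:ℝ) - 2)/n) ≤ B * m := by
    have hLHS : Tendsto (fun k : ℕ =>
        (μ (Metric.ball x₀ (Real.pi - Real.pi/((k:ℝ)+2)))).toReal ^ (((n:ℝ) - 2)/n))
        atTop (𝓝 (m ^ (((n:ℝ) - 2)/n))) :=
      ((Real.continuousAt_rpow_const m _ (Or.inl hmpos.ne')).tendsto.comp hseq)
    have hεtend : Tendsto (fun k : ℕ => Real.pi/((k:ℝ)+2)) atTop (𝓝 0) :=
      tendsto_const_nhds.div_atTop
        (tendsto_atTop_add_const_right atTop 2 tendsto_natCast_atTop_atTop)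
    have hRHS : Tendsto (fun k : ℕ =>
        (A * C^2 * m * ω / W) * (Real.pi/((k:ℝ)+2))^(n-2) + B * m) atTop (𝓝 (B * m)) := by
      have h2 : Tendsto (fun k : ℕ => (Real.pi/((k:ℝ)+2))^(n-2)) atTop (𝓝 0) := by
        have h3 := hεtend.pow (n-2)
        simpa [zero_pow (by omega : n - 2 ≠ 0)] using h3
      have h3 := (h2.const_mul (A * C^2 * m * ω / W)).add_const (B * m)
      simpa using h3
    refine le_of_tendsto_of_tendsto' hLHS hRHS fun k => ?_
    apply key
    · positivity
    · apply div_le_div_of_nonneg_left hπ.le two_pos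
      have : (0:ℝ) ≤ (k:ℝ) := Nat.cast_nonneg k
      linarith
  have hq2 : m ^ (-(2:ℝ)/n) ≤ B := by
    have hexp : ((n:ℝ) - 2)/n = 1 + (-(2:ℝ)/n) := by field_simp; ring
    rw [hexp, Real.rpow_add hmpos, Real.rpow_one, mul_comm B m] at hql
    exact (mul_le_mul_iff_right₀ hmpos).1 hql
  have hBm : B ^ (-((n:ℝ)/2)) ≤ m := by
    have h1 : 0 < m ^ (-(2:ℝ)/n) := Real.rpow_pos_of_pos hmpos _
    have h2 := Real.rpow_le_rpow_of_nonpos h1 hq2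
      (neg_nonpos.2 (by positivity : (0:ℝ) ≤ (n:ℝ)/2))
    have h3 : (m ^ (-(2:ℝ)/n)) ^ (-((n:ℝ)/2)) = m := by
      rw [← Real.rpow_mul hmpos.le]
      have he : (-(2:ℝ)/n) * (-((n:ℝ)/2)) = 1 := by field_simp
      rw [he, Real.rpow_one]
    rw [h3] at h2
    exact h2
  -- conclude via Bishop–Gromov
  intro ρ hρ
  rcases eq_or_lt_of_le hρ.1 with h0 | h0
  · rw [← h0]
    have hz : sphereBallVol n 0 = 0 := by
      simp [sphereBallVol, intervalIntegral.integral_same]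
    rw [hz, mul_zero]
    exact ENNReal.toReal_nonneg
  · have hbg := hBG x₀ ρ Real.pi h0 hρ.2 le_rfl
    rw [← hWdef, ← hmdef] at hbg
    set c := min ((4 / ((n : ℝ) * ((n : ℝ) - 2)) * W ^ (-(2 : ℝ) / n)) / A)
           (W ^ (-(2 : ℝ) / n) / B) with hcdef
    have hWr : 0 < W ^ (-(2:ℝ)/n) := Real.rpow_pos_of_pos hWpos _
    have hcpos : 0 < c := lt_min (by positivity) (by positivity)
    have hc2 : c ≤ W ^ (-(2:ℝ)/n) / B := min_le_right _ _
    have hstep : c ^ ((n:ℝ)/2) ≤ B ^ (-((n:ℝ)/2)) / W := by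
      calc c ^ ((n:ℝ)/2) ≤ (W ^ (-(2:ℝ)/n) / B) ^ ((n:ℝ)/2) :=
            Real.rpow_le_rpow hcpos.le hc2 (by positivity)
        _ = B ^ (-((n:ℝ)/2)) / W := by
            rw [Real.div_rpow (Real.rpow_nonneg hWpos.le _) hB.le,
              ← Real.rpow_mul hWpos.le]
            have he : (-(2:ℝ)/n) * ((n:ℝ)/2) = -1 := by field_simp
            rw [he, Real.rpow_neg_one, Real.rpow_neg hB.le]
            rw [div_eq_mul_inv, div_eq_mul_inv]
            ring
    have hVρ : 0 ≤ sphereBallVol n ρ := sphereBallVol_nonneg n hρ.1 hρ.2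
    have h4 : c ^ ((n:ℝ)/2) ≤ m / W := by
      refine le_trans hstep ?_
      exact (div_le_div_iff_of_pos_right hWpos).2 hBm
    calc c ^ ((n:ℝ)/2) * sphereBallVol n ρ
        ≤ (m / W) * sphereBallVol n ρ := mul_le_mul_of_nonneg_right h4 hVρ
      _ = m * sphereBallVol n ρ / W := by ring
      _ ≤ (μ (Metric.ball x₀ ρ)).toReal := by
          rw [div_le_iff₀ hWpos]
          exact hbg
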